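/- arXiv:2303.17663 — 2 statements merged into one kernel-verified Lean document; each statement's English description precedes it below -/
import Mathlib

section
/- Let A be a symmetric n×n real matrix whose eigenvalues all lie in the interval [a,b]. Then all eigenvalues of the curvature operator of the second kind of A ⊙∧ id (i.e., the operator π ∘ (A ⊙∧ id) on trace-free symmetric two-tensors) lie in [2a, 2b]. -/
open Finset

/-- The Kulkarni–Nomizu product `A ⊙∧ id`, acting on two-tensors `φ` by
`(Rφ)_{il} = Σ_{j,k} (A_{ik}δ_{jl} + A_{jl}δ_{ik} − A_{jk}δ_{il} − A_{il}δ_{jk}) φ_{jk}`. -/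
noncomputable def KNid {n : ℕ} (A φ : Matrix (Fin n) (Fin n) ℝ) :
    Matrix (Fin n) (Fin n) ℝ :=
  fun i l => ∑ j : Fin n, ∑ k : Fin n,
    (A i k * (if j = l then (1:ℝ) else 0) + A j l * (if i = k then (1:ℝ) else 0)
      - A j k * (if i = l then (1:ℝ) else 0) - A i l * (if j = k then (1:ℝ) else 0)) * φ j k

/-- Orthogonal projection onto trace-free symmetric two-tensors. -/
noncomputable def tracefreeProj {n : ℕ} (φ : Matrix (Fin n) (Fin n) ℝ) :
    Matrix (Fin n) (Fin n) ℝ :=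
  φ - (φ.trace / n) • (1 : Matrix (Fin n) (Fin n) ℝ)

/-!
For a trace-free symmetric `φ` one has `(A ⊙∧ id) φ = Aφ + φA - ⟨A, φ⟩ id`, so pairing the
eigenvalue equation `π((A ⊙∧ id) φ) = λ φ` with `φ` (the trace part pairs to zero) gives
`λ |φ|² = 2 tr(φ A φ)`. Since `A - a` and `b - A` are positive semidefinite, so are
`φ (A - a) φ` and `φ (b - A) φ`, whence `a |φ|² ≤ tr(φ A φ) ≤ b |φ|²`.
-/

open scoped ComplexOrder

namespace Matrix

section Eigenvalues

variable {𝕜 ι : Type*} [RCLike 𝕜] [Fintype ι] [DecidableEq ι] {A : Matrix ι ι 𝕜}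

lemma IsHermitian.posSemidef_of_forall_eigenvalue_nonneg (hA : A.IsHermitian)
    (h : ∀ (μ : ℝ) (v : ι → 𝕜), v ≠ 0 → A *ᵥ v = μ • v → 0 ≤ μ) : A.PosSemidef :=
  hA.posSemidef_iff_eigenvalues_nonneg.mpr fun i =>
    h _ _ (fun h0 => hA.eigenvectorBasis.orthonormal.ne_zero i (by ext k; exact congrFun h0 k))
      (hA.mulVec_eigenvectorBasis i)

lemma IsHermitian.posSemidef_sub_smul_one (hA : A.IsHermitian) {a : ℝ}
    (h : ∀ (μ : ℝ) (v : ι → 𝕜), v ≠ 0 → A *ᵥ v = μ • v → a ≤ μ) :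
    (A - a • 1).PosSemidef := by
  have hsub := hA.sub (isHermitian_one.smul (IsSelfAdjoint.all a))
  refine hsub.posSemidef_of_forall_eigenvalue_nonneg fun μ v hv hμ => ?_
  have hAv : A *ᵥ v = (μ + a) • v := by
    rw [sub_mulVec, smul_mulVec, one_mulVec, sub_eq_iff_eq_add] at hμ
    rw [hμ, add_smul]
  linarith [h _ v hv hAv]

lemma IsHermitian.posSemidef_smul_one_sub (hA : A.IsHermitian) {b : ℝ}
    (h : ∀ (μ : ℝ) (v : ι → 𝕜), v ≠ 0 → A *ᵥ v = μ • v → μ ≤ b) :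
    (b • 1 - A).PosSemidef := by
  have hsub := (isHermitian_one.smul (IsSelfAdjoint.all b)).sub hA
  refine hsub.posSemidef_of_forall_eigenvalue_nonneg fun μ v hv hμ => ?_
  have hAv : A *ᵥ v = (b - μ) • v := by
    rw [sub_mulVec, smul_mulVec, one_mulVec, sub_eq_iff_eq_add, ← sub_eq_iff_eq_add'] at hμ
    rw [← hμ, sub_smul]
  linarith [h _ v hv hAv]

end Eigenvalues

section Real

variable {ι κ : Type*} [Fintype ι] [Fintype κ]

lemma trace_transpose_mul_self_pos {B : Matrix ι κ ℝ} (hB : B ≠ 0) : 0 < (Bᵀ * B).trace :=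
  (posSemidef_conjTranspose_mul_self B).trace_nonneg.lt_of_ne'
    (trace_conjTranspose_mul_self_eq_zero_iff.not.mpr hB)

variable [DecidableEq ι] {A : Matrix ι ι ℝ}

lemma mul_trace_le_trace_transpose_mul_mul {a : ℝ} (h : (A - a • 1).PosSemidef)
    (B : Matrix ι κ ℝ) : a * (Bᵀ * B).trace ≤ (Bᵀ * A * B).trace := by
  have := (h.conjTranspose_mul_mul_same B).trace_nonneg
  simp only [conjTranspose_eq_transpose_of_trivial, Matrix.mul_sub, Matrix.sub_mul, trace_sub,
    Matrix.mul_smul, Matrix.smul_mul, Matrix.mul_one, trace_smul, smul_eq_mul] at this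
  linarith

lemma trace_transpose_mul_mul_le_mul_trace {b : ℝ} (h : (b • 1 - A).PosSemidef)
    (B : Matrix ι κ ℝ) : (Bᵀ * A * B).trace ≤ b * (Bᵀ * B).trace := by
  have := (h.conjTranspose_mul_mul_same B).trace_nonneg
  simp only [conjTranspose_eq_transpose_of_trivial, Matrix.mul_sub, Matrix.sub_mul, trace_sub,
    Matrix.mul_smul, Matrix.smul_mul, Matrix.mul_one, trace_smul, smul_eq_mul] at this
  linarith

end Real

end Matrix

open Matrix

lemma KNid_eq {n : ℕ} (A φ : Matrix (Fin n) (Fin n) ℝ) :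
    KNid A φ = A * φᵀ + φᵀ * A - (Aᵀ * φ).trace • 1 - φ.trace • A := by
  ext i l
  simp only [KNid, add_mul, sub_mul, ite_mul, mul_ite, zero_mul, mul_one, mul_zero,
    sum_add_distrib, sum_sub_distrib, sum_ite_eq, mem_univ, if_true, Matrix.sub_apply,
    Matrix.add_apply, Matrix.smul_apply, mul_apply, one_apply, transpose_apply, trace,
    Matrix.diag, smul_eq_mul]
  rw [sum_comm (f := fun x y => if x = l then A i y * φ x y else 0)]
  simp only [sum_ite_eq', mem_univ, if_true, ← mul_sum]
  by_cases h : i = l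
  · subst h
    simp only [↓reduceIte, mul_comm, sub_left_inj, sub_right_inj]
    exact sum_comm
  · simp [h, mul_comm]

lemma trace_KNid_mul_self {n : ℕ} (A : Matrix (Fin n) (Fin n) ℝ) {φ : Matrix (Fin n) (Fin n) ℝ}
    (hφs : φ.IsSymm) (hφtr : φ.trace = 0) :
    (KNid A φ * φ).trace = 2 * (φᵀ * A * φ).trace := by
  rw [KNid_eq, hφs.eq]
  simp only [Matrix.add_mul, Matrix.sub_mul, trace_add, trace_sub, Matrix.smul_mul,
    Matrix.one_mul, trace_smul, smul_eq_mul, hφtr, mul_zero, zero_mul, sub_zero,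
    trace_mul_cycle A φ φ]
  ring

lemma trace_tracefreeProj_mul {n : ℕ} (X φ : Matrix (Fin n) (Fin n) ℝ) :
    (tracefreeProj X * φ).trace = (X * φ).trace - X.trace / n * φ.trace := by
  simp [tracefreeProj, Matrix.sub_mul, trace_sub]

theorem stmt11_general {n : ℕ} (A : Matrix (Fin n) (Fin n) ℝ) (hA : A.IsSymm)
    (a b : ℝ)
    (hspec : ∀ (μ : ℝ) (v : Fin n → ℝ), v ≠ 0 → A.mulVec v = μ • v → μ ∈ Set.Icc a b)
    (lamE : ℝ) (φ : Matrix (Fin n) (Fin n) ℝ) (hφ : φ ≠ 0) (hφs : φ.IsSymm)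
    (hφtr : φ.trace = 0) (heig : tracefreeProj (KNid A φ) = lamE • φ) :
    lamE ∈ Set.Icc (2 * a) (2 * b) := by
  have hA' : A.IsHermitian := isHermitian_iff_isSymm.mpr hA
  have hpair : lamE * (φᵀ * φ).trace = 2 * (φᵀ * A * φ).trace := by
    have h := congrArg (fun M => (M * φ).trace) heig
    simp only [trace_tracefreeProj_mul, trace_KNid_mul_self A hφs hφtr, hφtr, mul_zero,
      sub_zero, Matrix.smul_mul, trace_smul, smul_eq_mul] at h
    rw [hφs.eq] at h ⊢
    exact h.symm
  have hpos := trace_transpose_mul_self_pos hφ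
  have hlow := mul_trace_le_trace_transpose_mul_mul
    (hA'.posSemidef_sub_smul_one fun μ v hv h => (hspec μ v hv h).1) φ
  have hup := trace_transpose_mul_mul_le_mul_trace
    (hA'.posSemidef_smul_one_sub fun μ v hv h => (hspec μ v hv h).2) φ
  exact ⟨le_of_mul_le_mul_right (by linarith) hpos, le_of_mul_le_mul_right (by linarith) hpos⟩

theorem stmt11 {n : ℕ} (hn : 0 < n) (A : Matrix (Fin n) (Fin n) ℝ) (hA : A.IsSymm)
    (a b : ℝ)
    (hspec : ∀ (μ : ℝ) (v : Fin n → ℝ), v ≠ 0 → A.mulVec v = μ • v → μ ∈ Set.Icc a b)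
    (lamE : ℝ) (φ : Matrix (Fin n) (Fin n) ℝ) (hφ : φ ≠ 0) (hφs : φ.IsSymm)
    (hφtr : φ.trace = 0) (heig : tracefreeProj (KNid A φ) = lamE • φ) :
    lamE ∈ Set.Icc (2 * a) (2 * b) :=
  stmt11_general A hA a b hspec lamE φ hφ hφs hφtr heig
end

section
/- Let a(t), b(t), c(t) solve a' = a² + bc, b' = b² + ac, c' = c² + ab on [0,T) with S := 2(a+b+c) > 0. Define Q := 2(a²+b²+c²+ab+ac+bc) (so Q = |Ric|²). Then (Q/S²)' = −(4/S³)(a²(b−c)² + b²(a−c)² + c²(a−b)²) ≤ 0; in particular Q/S² is monotone non-increasing. -/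
/-!
With `S = 2(a+b+c)` and `Q = 2(a²+b²+c²+ab+ac+bc)`, Hamilton's ODE gives `S' = Q` and
`Q' = 4(a³+b³+c³+3abc+ab²+a²b+ac²+a²c+bc²+b²c)`, so the quotient rule yields
`(Q/S²)' = (Q'S - 2Q²)/S³`. The numerator `Q'S - 2Q²` is the polynomial identity
`-4(a²(b-c)² + b²(a-c)² + c²(a-b)²)`, which is nonpositive, and `S > 0`; monotonicity then
follows from the mean value theorem.
-/

theorem HasDerivAt.div_sq {f g : ℝ → ℝ} {f' g' x : ℝ} (hf : HasDerivAt f f' x)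
    (hg : HasDerivAt g g' x) (hx : g x ≠ 0) :
    HasDerivAt (fun y => f y / g y ^ 2) ((f' * g x - 2 * f x * g') / g x ^ 3) x := by
  refine (hf.fun_div (hg.fun_pow 2) (pow_ne_zero 2 hx)).congr_deriv ?_
  field_simp
  ring

theorem antitoneOn_of_hasDerivAt_nonpos {D : Set ℝ} (hD : Convex ℝ D) {f f' : ℝ → ℝ}
    (hf : ∀ x ∈ D, HasDerivAt f (f' x) x) (hf' : ∀ x ∈ D, f' x ≤ 0) : AntitoneOn f D :=
  antitoneOn_of_hasDerivWithinAt_nonpos hD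
    (fun x hx => (hf x hx).continuousAt.continuousWithinAt)
    (fun x hx => (hf x (interior_subset hx)).hasDerivWithinAt)
    (fun x hx => hf' x (interior_subset hx))

namespace RicciFlow3

/-- Scalar curvature of a 3-manifold whose curvature operator has eigenvalues `x, y, z`. -/
def scal (x y z : ℝ) : ℝ := 2 * (x + y + z)

/-- `|Ric|²` of a 3-manifold whose curvature operator has eigenvalues `x, y, z`. -/
def ricNormSq (x y z : ℝ) : ℝ := 2 * (x ^ 2 + y ^ 2 + z ^ 2 + x * y + x * z + y * z)

def pinchingDefect (x y z : ℝ) : ℝ :=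
  x ^ 2 * (y - z) ^ 2 + y ^ 2 * (x - z) ^ 2 + z ^ 2 * (x - y) ^ 2

theorem pinchingDefect_nonneg (x y z : ℝ) : 0 ≤ pinchingDefect x y z := by
  unfold pinchingDefect
  positivity

theorem ricNormSq_deriv_mul_scal_sub (x y z : ℝ) :
    4 * (x ^ 3 + y ^ 3 + z ^ 3 + 3 * x * y * z + x * y ^ 2 + x ^ 2 * y + x * z ^ 2 + x ^ 2 * z
        + y * z ^ 2 + y ^ 2 * z) * scal x y z - 2 * ricNormSq x y z * ricNormSq x y z
      = -4 * pinchingDefect x y z := by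
  unfold scal ricNormSq pinchingDefect
  ring

section Flow

variable {a b c : ℝ → ℝ} {t : ℝ}
  (ha : HasDerivAt a (a t ^ 2 + b t * c t) t)
  (hb : HasDerivAt b (b t ^ 2 + a t * c t) t)
  (hc : HasDerivAt c (c t ^ 2 + a t * b t) t)
include ha hb hc

theorem hasDerivAt_scal :
    HasDerivAt (fun s => scal (a s) (b s) (c s)) (ricNormSq (a t) (b t) (c t)) t := by
  refine (((ha.add hb).add hc).const_mul 2).congr_deriv ?_
  unfold ricNormSq
  ring

theorem hasDerivAt_ricNormSq :
    HasDerivAt (fun s => ricNormSq (a s) (b s) (c s))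
      (4 * (a t ^ 3 + b t ^ 3 + c t ^ 3 + 3 * a t * b t * c t + a t * b t ^ 2 + a t ^ 2 * b t
        + a t * c t ^ 2 + a t ^ 2 * c t + b t * c t ^ 2 + b t ^ 2 * c t)) t := by
  refine ((((((ha.pow 2).add (hb.pow 2)).add (hc.pow 2)).add (ha.mul hb)).add (ha.mul hc)
    |>.add (hb.mul hc)).const_mul 2).congr_deriv ?_
  ring

theorem hasDerivAt_ricNormSq_div_scal_sq (hS : scal (a t) (b t) (c t) ≠ 0) :
    HasDerivAt (fun s => ricNormSq (a s) (b s) (c s) / scal (a s) (b s) (c s) ^ 2)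
      (-(4 / scal (a t) (b t) (c t) ^ 3) * pinchingDefect (a t) (b t) (c t)) t := by
  refine ((hasDerivAt_ricNormSq ha hb hc).div_sq (hasDerivAt_scal ha hb hc) hS).congr_deriv ?_
  rw [ricNormSq_deriv_mul_scal_sub]
  ring

end Flow

theorem neg_div_scal_pow_three_mul_pinchingDefect_nonpos {x y z : ℝ} (hS : 0 < scal x y z) :
    -(4 / scal x y z ^ 3) * pinchingDefect x y z ≤ 0 :=
  mul_nonpos_of_nonpos_of_nonneg (neg_nonpos.2 (by positivity)) (pinchingDefect_nonneg x y z)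

end RicciFlow3

open RicciFlow3 in
theorem stmt14 (a b c : ℝ → ℝ) (T : ℝ)
    (ha : ∀ t ∈ Set.Ico (0:ℝ) T, HasDerivAt a ((a t)^2 + b t * c t) t)
    (hb : ∀ t ∈ Set.Ico (0:ℝ) T, HasDerivAt b ((b t)^2 + a t * c t) t)
    (hc : ∀ t ∈ Set.Ico (0:ℝ) T, HasDerivAt c ((c t)^2 + a t * b t) t)
    (hS : ∀ t ∈ Set.Ico (0:ℝ) T, 0 < 2 * (a t + b t + c t)) :
    (∀ t ∈ Set.Ico (0:ℝ) T,
      HasDerivAt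
        (fun s => 2 * ((a s)^2 + (b s)^2 + (c s)^2 + a s * b s + a s * c s + b s * c s)
          / (2 * (a s + b s + c s))^2)
        (-(4 / (2 * (a t + b t + c t))^3)
          * ((a t)^2 * (b t - c t)^2 + (b t)^2 * (a t - c t)^2 + (c t)^2 * (a t - b t)^2)) t ∧
      -(4 / (2 * (a t + b t + c t))^3)
          * ((a t)^2 * (b t - c t)^2 + (b t)^2 * (a t - c t)^2 + (c t)^2 * (a t - b t)^2) ≤ 0) ∧
    (∀ s ∈ Set.Ico (0:ℝ) T, ∀ t ∈ Set.Ico (0:ℝ) T, s ≤ t →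
      2 * ((a t)^2 + (b t)^2 + (c t)^2 + a t * b t + a t * c t + b t * c t)
          / (2 * (a t + b t + c t))^2
        ≤ 2 * ((a s)^2 + (b s)^2 + (c s)^2 + a s * b s + a s * c s + b s * c s)
          / (2 * (a s + b s + c s))^2) := by
  have hderiv : ∀ t ∈ Set.Ico (0:ℝ) T,
      HasDerivAt (fun s => ricNormSq (a s) (b s) (c s) / scal (a s) (b s) (c s) ^ 2)
        (-(4 / scal (a t) (b t) (c t) ^ 3) * pinchingDefect (a t) (b t) (c t)) t := fun t ht =>
    hasDerivAt_ricNormSq_div_scal_sq (ha t ht) (hb t ht) (hc t ht) (hS t ht).ne'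
  have hnonpos : ∀ t ∈ Set.Ico (0:ℝ) T,
      -(4 / scal (a t) (b t) (c t) ^ 3) * pinchingDefect (a t) (b t) (c t) ≤ 0 := fun t ht =>
    neg_div_scal_pow_three_mul_pinchingDefect_nonpos (hS t ht)
  refine ⟨fun t ht => ⟨hderiv t ht, hnonpos t ht⟩, fun s hs t ht hst => ?_⟩
  exact antitoneOn_of_hasDerivAt_nonpos (convex_Ico 0 T) hderiv hnonpos hs ht hst
end
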